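/- Let Z ∈ ℝ^{n×p} and Ẑ ∈ ℝ^{n×p} with both Z and W = Z − Ẑ full column rank. Then for any A_k ∈ ℝ^{n×m}: ‖[I_n − π(Z)]A_k‖_{2,F} ≤ ‖[I_n − π(W)]A_k‖_{2,F} + ‖Ẑ‖₂ ‖W⁺‖₂ ‖A_k‖_{2,F}, where π(M) = MM⁺ and the subscript 2,F means the inequality holds in both the spectral and Frobenius norms. -/

import Mathlib

open Matrix

noncomputable def specNorm {m n : ℕ} (M : Matrix (Fin m) (Fin n) ℝ) : ℝ :=
  ‖LinearMap.toContinuousLinearMap (Matrix.toEuclideanLin M)‖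

noncomputable def froNorm {m n : ℕ} (M : Matrix (Fin m) (Fin n) ℝ) : ℝ :=
  Real.sqrt (∑ i, ∑ j, (M i j)^2)

noncomputable def proj {n p : ℕ} (Z : Matrix (Fin n) (Fin p) ℝ) : Matrix (Fin n) (Fin n) ℝ :=
  Z * (Zᵀ * Z)⁻¹ * Zᵀ

/-- Moore–Penrose inverse of a full column rank matrix. -/
noncomputable def pinvCol {n p : ℕ} (W : Matrix (Fin n) (Fin p) ℝ) : Matrix (Fin p) (Fin n) ℝ :=
  (Wᵀ * W)⁻¹ * Wᵀ
/-!
Write `Q = I − π(Z)`. Since `QZ = 0` and `π(W) = WW⁺`, we get `Qπ(W) = Q(W − Z)W⁺ = −QẐW⁺`, hence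
`QA = Q(I − π(W))A − (QẐW⁺)A`. As `Q` is an orthogonal projection, `‖Q‖₂ ≤ 1`, and both the
spectral and the Frobenius norm satisfy `‖BM‖ ≤ ‖B‖₂‖M‖`, so the triangle inequality concludes.
-/

open scoped Matrix.Norms.L2Operator

lemma specNorm_eq_norm {a b : ℕ} (M : Matrix (Fin a) (Fin b) ℝ) : specNorm M = ‖M‖ := rfl

lemma Matrix.isUnit_of_rank_eq_card {K ι : Type*} [Field K] [Fintype ι] [DecidableEq ι]
    {M : Matrix ι ι K} (h : M.rank = Fintype.card ι) : IsUnit M := by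
  rw [← Matrix.mulVec_surjective_iff_isUnit]
  refine (LinearMap.range_eq_top (f := M.mulVecLin)).mp (Submodule.eq_top_of_finrank_eq ?_)
  simpa [Matrix.rank] using h

section Projection

variable {n p : ℕ}

lemma isUnit_transpose_mul_self {Z : Matrix (Fin n) (Fin p) ℝ} (hZ : Z.rank = p) :
    IsUnit (Zᵀ * Z) :=
  isUnit_of_rank_eq_card (by rw [rank_transpose_mul_self, hZ, Fintype.card_fin])

lemma proj_eq_mul_pinvCol (W : Matrix (Fin n) (Fin p) ℝ) : proj W = W * pinvCol W :=
  Matrix.mul_assoc _ _ _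

lemma proj_mul_self {Z : Matrix (Fin n) (Fin p) ℝ} (hZ : Z.rank = p) : proj Z * Z = Z := by
  rw [proj_eq_mul_pinvCol, pinvCol, Matrix.mul_assoc, Matrix.mul_assoc,
    Matrix.nonsing_inv_mul _ ((isUnit_iff_isUnit_det _).mp (isUnit_transpose_mul_self hZ)),
    Matrix.mul_one]

lemma isSelfAdjoint_proj (Z : Matrix (Fin n) (Fin p) ℝ) : IsSelfAdjoint (proj Z) := by
  simp only [IsSelfAdjoint, proj, Matrix.mul_assoc, star_eq_conjTranspose,
    conjTranspose_eq_transpose_of_trivial, transpose_mul, transpose_transpose, transpose_nonsing_inv]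

lemma isStarProjection_proj {Z : Matrix (Fin n) (Fin p) ℝ} (hZ : Z.rank = p) :
    IsStarProjection (proj Z) where
  isIdempotentElem := by
    rw [IsIdempotentElem]
    nth_rw 2 [proj_eq_mul_pinvCol]
    rw [← Matrix.mul_assoc, proj_mul_self hZ, proj_eq_mul_pinvCol]
  isSelfAdjoint := isSelfAdjoint_proj Z

lemma one_sub_proj_mul_self {Z : Matrix (Fin n) (Fin p) ℝ} (hZ : Z.rank = p) :
    (1 - proj Z) * Z = 0 := by
  rw [Matrix.sub_mul, Matrix.one_mul, proj_mul_self hZ, sub_self]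

lemma specNorm_one_sub_proj_le {Z : Matrix (Fin n) (Fin p) ℝ} (hZ : Z.rank = p) :
    specNorm (1 - proj Z) ≤ 1 :=
  (isStarProjection_proj hZ).one_sub.norm_le

lemma one_sub_proj_mul_proj {Z : Matrix (Fin n) (Fin p) ℝ} (hZ : Z.rank = p)
    (W : Matrix (Fin n) (Fin p) ℝ) :
    (1 - proj Z) * proj W = (1 - proj Z) * (W - Z) * pinvCol W := by
  rw [proj_eq_mul_pinvCol W, Matrix.mul_sub, one_sub_proj_mul_self hZ, sub_zero, Matrix.mul_assoc]

end Projection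

section Frobenius

variable {a b c : ℕ}

lemma froNorm_nonneg (M : Matrix (Fin a) (Fin b) ℝ) : 0 ≤ froNorm M :=
  Real.sqrt_nonneg _

lemma froNorm_sq_eq_sum_col (M : Matrix (Fin a) (Fin b) ℝ) :
    froNorm M ^ 2 = ∑ j, ‖WithLp.toLp 2 (Mᵀ j)‖ ^ 2 := by
  simp only [froNorm, EuclideanSpace.norm_sq_eq, Real.norm_eq_abs, sq_abs, transpose_apply]
  rw [Real.sq_sqrt (by positivity), Finset.sum_comm]

lemma froNorm_eq_norm_toLp (M : Matrix (Fin a) (Fin b) ℝ) :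
    froNorm M = ‖WithLp.toLp 2 (fun q : Fin a × Fin b ↦ M q.1 q.2)‖ := by
  simp only [froNorm, EuclideanSpace.norm_eq, Real.norm_eq_abs, sq_abs, Fintype.sum_prod_type]

lemma froNorm_sub_le (A B : Matrix (Fin a) (Fin b) ℝ) :
    froNorm (A - B) ≤ froNorm A + froNorm B := by
  simp only [froNorm_eq_norm_toLp]
  exact norm_sub_le (WithLp.toLp 2 fun q : Fin a × Fin b ↦ A q.1 q.2)
    (WithLp.toLp 2 fun q : Fin a × Fin b ↦ B q.1 q.2)

lemma froNorm_mul_le (A : Matrix (Fin a) (Fin b) ℝ) (B : Matrix (Fin b) (Fin c) ℝ) :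
    froNorm (A * B) ≤ specNorm A * froNorm B := by
  have hcol (j : Fin c) : ‖WithLp.toLp 2 ((A * B)ᵀ j)‖ ≤ specNorm A * ‖WithLp.toLp 2 (Bᵀ j)‖ :=
    l2_opNorm_mulVec A (WithLp.toLp 2 (Bᵀ j))
  refine (sq_le_sq₀ (froNorm_nonneg _) (mul_nonneg (norm_nonneg _) (froNorm_nonneg _))).mp ?_
  rw [mul_pow, froNorm_sq_eq_sum_col, froNorm_sq_eq_sum_col, Finset.mul_sum]
  gcongr with j
  rw [← mul_pow]
  exact pow_le_pow_left₀ (norm_nonneg _) (hcol j) 2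

end Frobenius

lemma one_sub_proj_mul_eq {n p m : ℕ} {Z : Matrix (Fin n) (Fin p) ℝ} (hZ : Z.rank = p)
    (Zhat : Matrix (Fin n) (Fin p) ℝ) (A : Matrix (Fin n) (Fin m) ℝ) :
    (1 - proj Z) * A = (1 - proj Z) * ((1 - proj (Z - Zhat)) * A)
      - (1 - proj Z) * Zhat * pinvCol (Z - Zhat) * A := by
  have hW : (1 - proj Z) * proj (Z - Zhat) = -((1 - proj Z) * Zhat * pinvCol (Z - Zhat)) := by
    rw [one_sub_proj_mul_proj hZ, sub_sub_cancel_left, Matrix.mul_neg, Matrix.neg_mul]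
  rw [← Matrix.mul_assoc, Matrix.mul_sub, Matrix.mul_one, hW, sub_neg_eq_add, Matrix.add_mul,
    add_sub_cancel_right]

lemma one_sub_proj_mul_le {n p m : ℕ} (N : Matrix (Fin n) (Fin m) ℝ → ℝ)
    (hN_nonneg : ∀ A, 0 ≤ N A) (hN_sub : ∀ A B, N (A - B) ≤ N A + N B)
    (hN_mul : ∀ (B : Matrix (Fin n) (Fin n) ℝ) A, N (B * A) ≤ specNorm B * N A)
    {Z : Matrix (Fin n) (Fin p) ℝ} (hZ : Z.rank = p) (Zhat : Matrix (Fin n) (Fin p) ℝ)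
    (A : Matrix (Fin n) (Fin m) ℝ) :
    N ((1 - proj Z) * A) ≤
      N ((1 - proj (Z - Zhat)) * A) + specNorm Zhat * specNorm (pinvCol (Z - Zhat)) * N A := by
  have hQ : ‖1 - proj Z‖ ≤ 1 := specNorm_one_sub_proj_le hZ
  have hQZ : specNorm ((1 - proj Z) * Zhat * pinvCol (Z - Zhat)) ≤
      specNorm Zhat * specNorm (pinvCol (Z - Zhat)) := by
    simp only [specNorm_eq_norm]
    calc ‖(1 - proj Z) * Zhat * pinvCol (Z - Zhat)‖
        ≤ ‖1 - proj Z‖ * ‖Zhat‖ * ‖pinvCol (Z - Zhat)‖ := by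
          grw [l2_opNorm_mul, l2_opNorm_mul]
      _ ≤ ‖Zhat‖ * ‖pinvCol (Z - Zhat)‖ := by
          grw [hQ, one_mul]
  calc N ((1 - proj Z) * A)
      ≤ N ((1 - proj Z) * ((1 - proj (Z - Zhat)) * A))
        + N ((1 - proj Z) * Zhat * pinvCol (Z - Zhat) * A) := by
        grw [one_sub_proj_mul_eq hZ Zhat A, hN_sub]
    _ ≤ N ((1 - proj (Z - Zhat)) * A) + specNorm Zhat * specNorm (pinvCol (Z - Zhat)) * N A := by
        gcongr
        · grw [hN_mul, specNorm_eq_norm, hQ, one_mul]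
          exact hN_nonneg _
        · grw [hN_mul, hQZ]
          exact hN_nonneg _

theorem projection_perturbation_general {n p m : ℕ}
    (Z Zhat : Matrix (Fin n) (Fin p) ℝ)
    (hZ : Z.rank = p)
    (Ak : Matrix (Fin n) (Fin m) ℝ) :
    specNorm (((1 : Matrix (Fin n) (Fin n) ℝ) - proj Z) * Ak) ≤
        specNorm (((1 : Matrix (Fin n) (Fin n) ℝ) - proj (Z - Zhat)) * Ak) +
          specNorm Zhat * specNorm (pinvCol (Z - Zhat)) * specNorm Ak ∧
      froNorm (((1 : Matrix (Fin n) (Fin n) ℝ) - proj Z) * Ak) ≤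
        froNorm (((1 : Matrix (Fin n) (Fin n) ℝ) - proj (Z - Zhat)) * Ak) +
          specNorm Zhat * specNorm (pinvCol (Z - Zhat)) * froNorm Ak :=
  ⟨one_sub_proj_mul_le specNorm (fun _ ↦ norm_nonneg _) norm_sub_le l2_opNorm_mul hZ Zhat Ak,
    one_sub_proj_mul_le froNorm froNorm_nonneg froNorm_sub_le froNorm_mul_le hZ Zhat Ak⟩

/-- Projection-perturbation inequality underlying Proposition 2: with `W = Z − Ẑ`,
`‖(I − π(Z))A_k‖ ≤ ‖(I − π(W))A_k‖ + ‖Ẑ‖₂‖W⁺‖₂‖A_k‖` in both spectral and Frobenius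
norms. -/
theorem projection_perturbation {n p m : ℕ}
    (Z Zhat : Matrix (Fin n) (Fin p) ℝ)
    (hZ : Z.rank = p) (hW : (Z - Zhat).rank = p)
    (Ak : Matrix (Fin n) (Fin m) ℝ) :
    specNorm (((1 : Matrix (Fin n) (Fin n) ℝ) - proj Z) * Ak) ≤
        specNorm (((1 : Matrix (Fin n) (Fin n) ℝ) - proj (Z - Zhat)) * Ak) +
          specNorm Zhat * specNorm (pinvCol (Z - Zhat)) * specNorm Ak ∧
      froNorm (((1 : Matrix (Fin n) (Fin n) ℝ) - proj Z) * Ak) ≤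
        froNorm (((1 : Matrix (Fin n) (Fin n) ℝ) - proj (Z - Zhat)) * Ak) +
          specNorm Zhat * specNorm (pinvCol (Z - Zhat)) * froNorm Ak :=
  projection_perturbation_general Z Zhat hZ Ak
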